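/- Let a < b be real numbers and let λ : [a,b] → ℝ be continuous with m := inf_{t∈[a,b]} λ(t) > 0; set Λ(t,s) = ∫_s^t λ(u) du and ω := sup_{u,v∈[a,b]} |λ(u) − λ(v)|. Then for every t ∈ [a,b], |Λ(t,a)/Λ(b,a) − (t − a)/(b − a)| ≤ ω/m. -/

import Mathlib

/-!
Write `x = ∫_a^t λ`, `y = ∫_t^b λ`, `p = t - a`, `q = b - t`. If `m ≤ λ ≤ M` then
`x/(x+y) - p/(p+q) = (x q - y p) / ((x+y)(p+q))`, whose numerator is at most `(M - m) p q` in
absolute value while the denominator is at least `m (p+q)²`. Finally `M - m ≤ ω`, since every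
value of `λ` lies within `ω` of every other.
-/

open MeasureTheory intervalIntegral Set

theorem abs_div_add_sub_div_add_le {x y p q m M : ℝ} (hm : 0 < m) (hp : 0 ≤ p) (hq : 0 ≤ q)
    (hpq : 0 < p + q) (hxm : m * p ≤ x) (hxM : x ≤ M * p) (hym : m * q ≤ y) (hyM : y ≤ M * q) :
    |x / (x + y) - p / (p + q)| ≤ (M - m) / m := by
  have hxy : m * (p + q) ≤ x + y := by linarith
  have hxy_pos : 0 < x + y := lt_of_lt_of_le (by positivity) hxy
  have hmM : 0 ≤ M - m := by nlinarith
  have hnum : |x * q - y * p| ≤ (M - m) * (p * q) := by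
    rw [abs_le]
    constructor <;> nlinarith [mul_le_mul_of_nonneg_right hxm hq, mul_le_mul_of_nonneg_right hxM hq,
      mul_le_mul_of_nonneg_right hym hp, mul_le_mul_of_nonneg_right hyM hp]
  have hpq_sq : p * q ≤ (p + q) ^ 2 := by nlinarith [mul_nonneg hp hq]
  rw [div_sub_div _ _ hxy_pos.ne' hpq.ne', show x * (p + q) - (x + y) * p = x * q - y * p by ring,
    abs_div, abs_of_pos (mul_pos hxy_pos hpq), div_le_div_iff₀ (mul_pos hxy_pos hpq) hm]
  calc |x * q - y * p| * m ≤ (M - m) * (p * q) * m := by gcongr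
    _ ≤ (M - m) * (m * (p + q) * (p + q)) := by nlinarith [mul_le_mul_of_nonneg_left hpq_sq hmM]
    _ ≤ (M - m) * ((x + y) * (p + q)) := by gcongr

theorem mul_sub_le_integral_of_le {f : ℝ → ℝ} {a b m : ℝ} (hab : a ≤ b)
    (hf : IntervalIntegrable f volume a b) (hm : ∀ u ∈ Icc a b, m ≤ f u) :
    m * (b - a) ≤ ∫ u in a..b, f u := by
  simpa [mul_comm] using integral_mono_on hab intervalIntegrable_const hf hm

theorem integral_le_mul_sub_of_le {f : ℝ → ℝ} {a b M : ℝ} (hab : a ≤ b)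
    (hf : IntervalIntegrable f volume a b) (hM : ∀ u ∈ Icc a b, f u ≤ M) :
    ∫ u in a..b, f u ≤ M * (b - a) := by
  simpa [mul_comm] using integral_mono_on hab hf intervalIntegrable_const hM

theorem abs_integral_div_integral_sub_div_le {f : ℝ → ℝ} {a b t m M : ℝ} (hab : a < b)
    (ht : t ∈ Icc a b) (hf : IntervalIntegrable f volume a b) (hm_pos : 0 < m)
    (hm : ∀ u ∈ Icc a b, m ≤ f u) (hM : ∀ u ∈ Icc a b, f u ≤ M) :
    |(∫ u in a..t, f u) / (∫ u in a..b, f u) - (t - a) / (b - a)| ≤ (M - m) / m := by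
  obtain ⟨hat, htb⟩ := ht
  have hIcc_at : Icc a t ⊆ Icc a b := Icc_subset_Icc_right htb
  have hIcc_tb : Icc t b ⊆ Icc a b := Icc_subset_Icc_left hat
  have hf_at : IntervalIntegrable f volume a t :=
    hf.mono_set (by rwa [uIcc_of_le hat, uIcc_of_le hab.le])
  have hf_tb : IntervalIntegrable f volume t b :=
    hf.mono_set (by rwa [uIcc_of_le htb, uIcc_of_le hab.le])
  rw [← integral_add_adjacent_intervals hf_at hf_tb,
    show b - a = (t - a) + (b - t) by ring]
  exact abs_div_add_sub_div_add_le hm_pos (by linarith) (by linarith) (by linarith)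
    (mul_sub_le_integral_of_le hat hf_at fun u hu => hm u (hIcc_at hu))
    (integral_le_mul_sub_of_le hat hf_at fun u hu => hM u (hIcc_at hu))
    (mul_sub_le_integral_of_le htb hf_tb fun u hu => hm u (hIcc_tb hu))
    (integral_le_mul_sub_of_le htb hf_tb fun u hu => hM u (hIcc_tb hu))

theorem sSup_image_sub_sInf_image_le {α : Type*} {f : α → ℝ} {s : Set α} (hs : s.Nonempty)
    (hbdd : BddAbove ((fun p : α × α => |f p.1 - f p.2|) '' s ×ˢ s)) :
    sSup (f '' s) - sInf (f '' s) ≤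
      sSup ((fun p : α × α => |f p.1 - f p.2|) '' s ×ˢ s) := by
  set ω := sSup ((fun p : α × α => |f p.1 - f p.2|) '' s ×ˢ s)
  have hclose : ∀ u ∈ s, ∀ v ∈ s, f u ≤ ω + f v := fun u hu v hv => by
    have := le_csSup hbdd ⟨(u, v), ⟨hu, hv⟩, rfl⟩
    linarith [le_abs_self (f u - f v)]
  have hsup : ∀ v ∈ s, sSup (f '' s) ≤ ω + f v := fun v hv =>
    csSup_le (hs.image f) (forall_mem_image.2 fun u hu => hclose u hu v hv)
  have hinf : sSup (f '' s) - ω ≤ sInf (f '' s) :=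
    le_csInf (hs.image f) (forall_mem_image.2 fun v hv => by linarith [hsup v hv])
  linarith

theorem stmt_11 (a b : ℝ) (hab : a < b) (lam : ℝ → ℝ)
    (hlam : ContinuousOn lam (Set.Icc a b))
    (hm : 0 < sInf (lam '' Set.Icc a b)) :
    ∀ t ∈ Set.Icc a b,
      |(∫ u in a..t, lam u) / (∫ u in a..b, lam u) - (t - a) / (b - a)| ≤
        sSup ((fun p : ℝ × ℝ => |lam p.1 - lam p.2|) '' Set.Icc a b ×ˢ Set.Icc a b) /
          sInf (lam '' Set.Icc a b) := by
  intro t ht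
  have himage : IsCompact (lam '' Icc a b) := isCompact_Icc.image_of_continuousOn hlam
  have hosc : BddAbove ((fun p : ℝ × ℝ => |lam p.1 - lam p.2|) '' Icc a b ×ˢ Icc a b) := by
    refine ((isCompact_Icc.prod isCompact_Icc).image_of_continuousOn ?_).bddAbove
    exact ((hlam.comp continuousOn_fst fun p hp => hp.1).sub
      (hlam.comp continuousOn_snd fun p hp => hp.2)).abs
  calc _ ≤ (sSup (lam '' Icc a b) - sInf (lam '' Icc a b)) / sInf (lam '' Icc a b) :=
        abs_integral_div_integral_sub_div_le hab ht (hlam.intervalIntegrable_of_Icc hab.le) hm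
          (fun u hu => csInf_le himage.bddBelow (mem_image_of_mem lam hu))
          (fun u hu => le_csSup himage.bddAbove (mem_image_of_mem lam hu))
    _ ≤ _ := by gcongr; exact sSup_image_sub_sInf_image_le ⟨a, left_mem_Icc.2 hab.le⟩ hosc
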